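/- Let Z(a)^{(n,m)} denote the 2^m × 2^n complex matrix |0⟩^{⊗m}⟨0|^{⊗n} + a·|1⟩^{⊗m}⟨1|^{⊗n}. Then for all a, b ∈ ℂ and all n, m, k, l ≥ 0 with k ≥ 1, Z(a)^{(k,m)} · Z(b)^{(n,k)} = Z(ab)^{(n,m)}. -/
import Mathlib


open Matrix

/-- The green spider `Z(a)^{(n,m)} = |0⟩^{⊗m}⟨0|^{⊗n} + a·|1⟩^{⊗m}⟨1|^{⊗n}`,
with tensor powers of ℂ² indexed by bit strings. -/
def greenSpider (a : ℂ) (n m : ℕ) : Matrix (Fin m → Fin 2) (Fin n → Fin 2) ℂ :=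
  fun r c =>
    (if (∀ i, r i = 0) ∧ (∀ j, c j = 0) then 1 else 0) +
      a * (if (∀ i, r i = 1) ∧ (∀ j, c j = 1) then 1 else 0)

/-- Spider fusion (S1): two green spiders sharing `k ≥ 1` wires fuse, with phases
multiplying. -/
theorem spider_fusion (a b : ℂ) (n m k : ℕ) (hk : 1 ≤ k) :
    greenSpider a k m * greenSpider b n k = greenSpider (a * b) n m := by
  ext r c
  rw [Matrix.mul_apply]
  have hne : (fun _ : Fin k => (0 : Fin 2)) ≠ (fun _ => 1) := by
    intro h
    have := congrFun h ⟨0, hk⟩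
    exact absurd this (by decide)
  rw [Fintype.sum_eq_add (fun _ => (0 : Fin 2)) (fun _ => (1 : Fin 2)) hne
      (by
        rintro x ⟨hx0, hx1⟩
        have h0 : ¬ ∀ i, x i = 0 := fun h => hx0 (funext h)
        have h1 : ¬ ∀ i, x i = 1 := fun h => hx1 (funext h)
        simp [greenSpider, h0, h1])]
  have hkf : ¬ (Fin k → False) := fun h => h ⟨0, hk⟩
  have e1 : greenSpider a k m r (fun _ => 0) = if ∀ i, r i = 0 then 1 else 0 := by
    simp [greenSpider, hkf]
  have e2 : greenSpider a k m r (fun _ => 1) = a * if ∀ i, r i = 1 then 1 else 0 := by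
    simp [greenSpider, hkf]
  have e3 : greenSpider b n k (fun _ => 0) c = if ∀ j, c j = 0 then 1 else 0 := by
    simp [greenSpider, hkf]
  have e4 : greenSpider b n k (fun _ => 1) c = b * if ∀ j, c j = 1 then 1 else 0 := by
    simp [greenSpider, hkf]
  rw [e1, e2, e3, e4]
  simp only [greenSpider]
  clear e1 e2 e3 e4 hkf hne
  split_ifs with p1 p2 p3 p4 p5 p6 <;> first | ring1 | tauto
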